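/- arXiv:1606.00376 — 7 statements merged into one kernel-verified Lean document; each statement's English description precedes it below -/
import Mathlib

section
/- If n ∈ M_{a,b} is reducible, i.e., n = m₁·m₂ for non-unit elements m₁, m₂ ∈ M_{a,b}, then n ≡ a² mod (b·g), where g = gcd(a,b). -/
/-- The arithmetical congruence monoid `M_{a,b} = {1} ∪ {n ≥ 1 : n ≡ a mod b}`. -/
def Mab (a b n : ℕ) : Prop := n = 1 ∨ (1 ≤ n ∧ n ≡ a [MOD b])

/-- `n` is reducible in `M_{a,b}`: a product of two non-unit elements. -/
def IsReducible (a b n : ℕ) : Prop :=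
  ∃ m₁ m₂ : ℕ, Mab a b m₁ ∧ Mab a b m₂ ∧ m₁ ≠ 1 ∧ m₂ ≠ 1 ∧ n = m₁ * m₂

/-- `n` is irreducible in `M_{a,b}`: a non-unit element that is not reducible. -/
def IsIrred (a b n : ℕ) : Prop := Mab a b n ∧ n ≠ 1 ∧ ¬ IsReducible a b n

/-- `d ∣ x`, so `a² - xy = x (a - y) + a (a - x)` is a sum of two multiples of `d b`. -/
theorem mul_dvd_sq_sub_mul_of_dvd_sub {R : Type*} [CommRing R] {a b d x y : R}
    (hda : d ∣ a) (hdb : d ∣ b) (hx : b ∣ a - x) (hy : b ∣ a - y) :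
    b * d ∣ a ^ 2 - x * y := by
  have hdx : d ∣ x := by simpa using dvd_sub hda (hdb.trans hx)
  have hsplit : a ^ 2 - x * y = x * (a - y) + a * (a - x) := by ring
  rw [hsplit, mul_comm b d]
  exact dvd_add (mul_dvd_mul hdx hy) (mul_dvd_mul hda hx)

theorem Nat.ModEq.mul_modEq_sq_mul_gcd {a b x y : ℕ} (hx : x ≡ a [MOD b]) (hy : y ≡ a [MOD b]) :
    x * y ≡ a ^ 2 [MOD b * a.gcd b] := by
  rw [Nat.modEq_iff_dvd]
  push_cast
  exact mul_dvd_sq_sub_mul_of_dvd_sub (Int.natCast_dvd_natCast.mpr (Nat.gcd_dvd_left a b))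
    (Int.natCast_dvd_natCast.mpr (Nat.gcd_dvd_right a b))
    (Nat.modEq_iff_dvd.mp hx) (Nat.modEq_iff_dvd.mp hy)

theorem Mab.modEq_of_ne_one {a b m : ℕ} (hm : Mab a b m) (hne : m ≠ 1) : m ≡ a [MOD b] :=
  (hm.resolve_left hne).2

theorem stmt_1_general (a b : ℕ)
    (n : ℕ) (hred : IsReducible a b n) :
    n ≡ a ^ 2 [MOD b * Nat.gcd a b] := by
  obtain ⟨m₁, m₂, h₁, h₂, hne₁, hne₂, rfl⟩ := hred
  exact (h₁.modEq_of_ne_one hne₁).mul_modEq_sq_mul_gcd (h₂.modEq_of_ne_one hne₂)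

theorem stmt_1 (a b : ℕ) (ha : 1 ≤ a) (hb : 1 ≤ b) (hsq : a ^ 2 ≡ a [MOD b])
    (n : ℕ) (hn : Mab a b n) (hred : IsReducible a b n) :
    n ≡ a ^ 2 [MOD b * Nat.gcd a b] :=
  stmt_1_general a b n hred
end

section
/- Suppose a > 1 and a divides b. Then an element n ∈ M_{a,b} with n ≠ 1 is reducible (a product of two non-units of M_{a,b}) if and only if n ≡ a² mod (a·b). -/
section

variable {a b : ℕ}

theorem mab_self (ha : 1 ≤ a) : Mab a b a := Or.inr ⟨ha, rfl⟩

theorem Mab.ne_zero {n : ℕ} (hn : Mab a b n) : n ≠ 0 := by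
  rcases hn with rfl | ⟨hn, -⟩ <;> omega

theorem dvd_of_modEq_of_dvd {m : ℕ} (hab : a ∣ b) (hm : m ≡ a [MOD b]) : a ∣ m :=
  (hm.dvd_iff hab).mpr dvd_rfl

theorem not_one_modEq_of_dvd (ha : 1 < a) (hab : a ∣ b) : ¬ 1 ≡ a [MOD b] := fun h ↦
  ha.ne' (Nat.dvd_one.mp ((h.dvd_iff hab).mpr dvd_rfl))

theorem mul_modEq_sq_of_modEq {m₁ m₂ : ℕ} (hab : a ∣ b) (h₁ : m₁ ≡ a [MOD b])
    (h₂ : m₂ ≡ a [MOD b]) : m₁ * m₂ ≡ a ^ 2 [MOD a * b] := by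
  have hm₂ : a * b ∣ b * m₂ := by
    rw [mul_comm a]
    exact mul_dvd_mul_left b (dvd_of_modEq_of_dvd hab h₂)
  calc m₁ * m₂ ≡ a * m₂ [MOD a * b] := (h₁.mul_right' m₂).of_dvd hm₂
    _ ≡ a * a [MOD a * b] := h₂.mul_left' a
    _ = a ^ 2 := (sq a).symm

theorem IsReducible.modEq_sq {n : ℕ} (hab : a ∣ b) (hn : IsReducible a b n) :
    n ≡ a ^ 2 [MOD a * b] := by
  obtain ⟨m₁, m₂, hm₁, hm₂, h₁, h₂, rfl⟩ := hn
  exact mul_modEq_sq_of_modEq hab (hm₁.resolve_left h₁).2 (hm₂.resolve_left h₂).2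

theorem isReducible_of_modEq_sq {n : ℕ} (ha : 1 < a) (hab : a ∣ b) (hn : n ≠ 0)
    (h : n ≡ a ^ 2 [MOD a * b]) : IsReducible a b n := by
  obtain ⟨m, rfl⟩ : a ∣ n := (h.dvd_iff (dvd_mul_right a b)).mpr (dvd_pow_self a two_ne_zero)
  have hm : m ≡ a [MOD b] := Nat.ModEq.mul_left_cancel' (c := a) (by omega) (by rwa [← sq])
  have hm1 : m ≠ 1 := by
    rintro rfl
    exact not_one_modEq_of_dvd ha hab hm
  exact ⟨a, m, mab_self ha.le, Or.inr ⟨Nat.pos_of_ne_zero (right_ne_zero_of_mul hn), hm⟩,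
    ha.ne', hm1, rfl⟩

end

theorem stmt_3_general (a b : ℕ) (ha : 1 < a) (hab : a ∣ b) (n : ℕ) (hn : Mab a b n) :
    IsReducible a b n ↔ n ≡ a ^ 2 [MOD a * b] :=
  ⟨IsReducible.modEq_sq hab, isReducible_of_modEq_sq ha hab hn.ne_zero⟩

theorem stmt_3 (a b : ℕ) (ha : 1 < a) (hb : 1 ≤ b) (hab : a ∣ b)
    (hsq : a ^ 2 ≡ a [MOD b]) (n : ℕ) (hn : Mab a b n) (hn1 : n ≠ 1) :
    IsReducible a b n ↔ n ≡ a ^ 2 [MOD a * b] :=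
  stmt_3_general a b ha hab n hn
end

section
/- For every k ≥ 1, the numbers n_j = b·g·j + g·a + (a + b − g)·∏_{i=1}^{k}(b·i + a) for j = 1, …, k form k consecutive elements of the arithmetic progression {n : n ≡ a² mod b·g} ∩ M_{a,b}, and each n_j is reducible in M_{a,b} (a product of two non-unit elements of M_{a,b}). -/
/-!
Since `a² ≡ a`, cancelling `a` gives `a ≡ 1` modulo `b / gcd(a, b)`, i.e. `b ∣ g (a - 1)`, so
`g a ≡ g [MOD b]`. For `t = a + b - g` this means `t a ≡ t [MOD b]`, hence `t x ≡ t` for every `x`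
congruent to a power of `a`. Pulling the factor `b j + a` out of the product `P = ∏ (b i + a)`
writes `n_j = (b j + a) (g + t Q)`, and the second factor is `≡ g + t = a + b ≡ a`, so both factors
are non-units of `M_{a,b}`. The congruence modulo `b g` uses `P ≡ aᵏ ≡ a [MOD b]` and `g ∣ t`.
-/

open Finset

namespace Nat

theorem gcd_le_add (a b : ℕ) : gcd a b ≤ a + b := by
  rcases b.eq_zero_or_pos with rfl | hb
  · simp
  · exact (gcd_le_right a hb).trans (le_add_left b a)

theorem pow_modEq_self_of_sq_modEq {a n m : ℕ} (h : a ^ 2 ≡ a [MOD n]) (hm : m ≠ 0) :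
    a ^ m ≡ a [MOD n] := by
  rw [← ZMod.natCast_eq_natCast_iff] at h ⊢
  push_cast at h ⊢
  exact IsIdempotentElem.pow_eq (by rwa [IsIdempotentElem, ← sq]) hm

theorem gcd_mul_modEq_gcd_of_sq_modEq {a b : ℕ} (hb : 0 < b) (h : a ^ 2 ≡ a [MOD b]) :
    gcd a b * a ≡ gcd a b [MOD b] := by
  have hcancel : a ≡ 1 [MOD b / gcd b a] :=
    Nat.ModEq.cancel_left_div_gcd hb (by rwa [mul_one, ← sq])
  have := hcancel.mul_left' (gcd b a)
  rwa [mul_one, Nat.mul_div_cancel' (gcd_dvd_left b a), gcd_comm] at this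

theorem add_sub_gcd_mul_pow_modEq {a b : ℕ} (hb : 0 < b) (h : a ^ 2 ≡ a [MOD b]) (m : ℕ) :
    (a + b - gcd a b) * a ^ m ≡ a + b - gcd a b [MOD b] := by
  have hg := gcd_mul_modEq_gcd_of_sq_modEq hb h
  rcases m.eq_zero_or_pos with rfl | hm
  · rw [pow_zero, mul_one]
  rw [← ZMod.natCast_eq_natCast_iff] at h hg ⊢
  push_cast [gcd_le_add a b] at h hg ⊢
  rw [ZMod.natCast_self, add_zero,
    IsIdempotentElem.pow_eq (by rwa [IsIdempotentElem, ← sq]) hm.ne']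
  linear_combination h - hg

theorem gcd_add_mul_modEq {a b x m : ℕ} (hb : 0 < b) (h : a ^ 2 ≡ a [MOD b])
    (hx : x ≡ a ^ m [MOD b]) : gcd a b + (a + b - gcd a b) * x ≡ a [MOD b] := by
  calc gcd a b + (a + b - gcd a b) * x
      ≡ gcd a b + (a + b - gcd a b) * a ^ m [MOD b] := (hx.mul_left _).add_left _
    _ ≡ gcd a b + (a + b - gcd a b) [MOD b] := (add_sub_gcd_mul_pow_modEq hb h m).add_left _
    _ = a + b := Nat.add_sub_of_le (gcd_le_add a b)
    _ ≡ a [MOD b] := add_modEq_right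

theorem mul_gcd_mul_add_modEq_sq {a b P : ℕ} (hP : P ≡ a [MOD b]) (j : ℕ) :
    b * gcd a b * j + gcd a b * a + (a + b - gcd a b) * P ≡ a ^ 2 [MOD b * gcd a b] := by
  set g := gcd a b
  obtain ⟨t, ht⟩ : g ∣ a + b - g :=
    Nat.dvd_sub (dvd_add (gcd_dvd_left a b) (gcd_dvd_right a b)) dvd_rfl
  obtain ⟨a', ha'⟩ : g ∣ a := gcd_dvd_left a b
  have htP : (a + b - g) * P ≡ (a + b - g) * a [MOD b * g] := by
    rw [ht, mul_assoc, mul_assoc, mul_comm b]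
    exact (hP.mul_left t).mul_left' g
  calc b * g * j + g * a + (a + b - g) * P
      ≡ 0 + g * a + (a + b - g) * a [MOD b * g] :=
        ((modEq_zero_iff_dvd.2 (dvd_mul_right _ j)).add_right _).add htP
    _ = a ^ 2 + a' * (b * g) := by
        rw [zero_add, ← add_mul, Nat.add_sub_of_le (gcd_le_add a b)]
        linear_combination b * ha'
    _ ≡ a ^ 2 [MOD b * g] := add_modEq_left_iff.2 (dvd_mul_left _ _)

end Nat

theorem Mab.mul {a b m₁ m₂ : ℕ} (h₁ : Mab a b m₁) (h₂ : Mab a b m₂) (h : a ^ 2 ≡ a [MOD b]) :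
    Mab a b (m₁ * m₂) := by
  rcases h₁ with rfl | ⟨h₁, h₁'⟩
  · rwa [one_mul]
  rcases h₂ with rfl | ⟨h₂, h₂'⟩
  · rw [mul_one]
    exact Or.inr ⟨h₁, h₁'⟩
  exact Or.inr ⟨Nat.mul_pos h₁ h₂, (h₁'.mul h₂').trans (by rwa [← sq])⟩

theorem IsReducible.mab {a b n : ℕ} (hn : IsReducible a b n) (h : a ^ 2 ≡ a [MOD b]) :
    Mab a b n := by
  obtain ⟨m₁, m₂, h₁, h₂, -, -, rfl⟩ := hn
  exact h₁.mul h₂ h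

theorem stmt_5 (a b : ℕ) (ha : 1 ≤ a) (hb : 1 ≤ b) (hsq : a ^ 2 ≡ a [MOD b])
    (g : ℕ) (hg : g = Nat.gcd a b) (k : ℕ) (hk : 1 ≤ k) :
    ∀ j : ℕ, 1 ≤ j → j ≤ k →
      (b * g * j + g * a + (a + b - g) * ∏ i ∈ Finset.Icc 1 k, (b * i + a))
          ≡ a ^ 2 [MOD b * g] ∧
      Mab a b (b * g * j + g * a + (a + b - g) * ∏ i ∈ Finset.Icc 1 k, (b * i + a)) ∧
      IsReducible a b
        (b * g * j + g * a + (a + b - g) * ∏ i ∈ Finset.Icc 1 k, (b * i + a)) ∧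
      (b * g * (j + 1) + g * a + (a + b - g) * ∏ i ∈ Finset.Icc 1 k, (b * i + a))
        = (b * g * j + g * a + (a + b - g) * ∏ i ∈ Finset.Icc 1 k, (b * i + a)) + b * g := by
  subst hg
  intro j hj1 hjk
  set g := Nat.gcd a b
  set t := a + b - g
  have hfactor (i : ℕ) : b * i + a ≡ a [MOD b] := Nat.add_modEq_right_iff.2 (dvd_mul_right b i)
  have hP : ∏ i ∈ Icc 1 k, (b * i + a) ≡ a [MOD b] := by
    refine (Nat.ModEq.prod fun i _ => hfactor i).trans ?_
    rw [prod_const, Nat.card_Icc, Nat.add_sub_cancel]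
    exact Nat.pow_modEq_self_of_sq_modEq hsq (by omega)
  set Q := ∏ i ∈ (Icc 1 k).erase j, (b * i + a)
  have hQ : Q ≡ a ^ #((Icc 1 k).erase j) [MOD b] :=
    (Nat.ModEq.prod fun i _ => hfactor i).trans (by rw [prod_const])
  have hbj : 0 < b * j := Nat.mul_pos hb hj1
  have hg : 0 < g := Nat.gcd_pos_of_pos_left b ha
  have htQ : 0 < t * Q := by
    have : g ≤ a := Nat.gcd_le_left b ha
    exact Nat.mul_pos (by omega) (prod_pos fun i _ => by positivity)
  have hred : IsReducible a b (b * g * j + g * a + t * ∏ i ∈ Icc 1 k, (b * i + a)) := by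
    refine ⟨b * j + a, g + t * Q, Or.inr ⟨by omega, hfactor j⟩,
      Or.inr ⟨by omega, Nat.gcd_add_mul_modEq hb hsq hQ⟩, by omega, by omega, ?_⟩
    rw [← mul_prod_erase _ _ (mem_Icc.2 ⟨hj1, hjk⟩)]
    ring
  exact ⟨Nat.mul_gcd_mul_add_modEq_sq hP j, hred.mab hsq, hred, by ring⟩
end

section
/- For every k ≥ 1 and j with 1 ≤ j ≤ k, the number n_j = b·g·j + g·a + (a + b − g)·∏_{i=1}^{k}(b·i + a) satisfies n_j ≡ a² mod (b·g). -/
/-! Write `P = ∏ i ∈ [1, k], (b i + a)`. Modulo `b` we have `P ≡ a ^ k ≡ a`, the last step because `a`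
is idempotent modulo `b`; since `g` divides `a + b - g`, this lifts to
`(a + b - g) P ≡ (a + b - g) a [MOD b g]`. Hence `n_j ≡ g a + (a + b - g) a = a ^ 2 + a b`, and
`b g ∣ a b` because `g ∣ a`. -/

open Finset

namespace Nat

theorem pow_modEq_self_of_sq_modEq_self {n a k : ℕ} (h : a ^ 2 ≡ a [MOD n]) (hk : k ≠ 0) :
    a ^ k ≡ a [MOD n] := by
  have hidem : IsIdempotentElem (a : ZMod n) := by
    rw [IsIdempotentElem, ← sq]
    exact_mod_cast (ZMod.natCast_eq_natCast_iff _ _ _).2 h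
  rw [← ZMod.natCast_eq_natCast_iff]
  push_cast
  exact hidem.pow_eq hk

theorem prod_mul_add_modEq_pow {ι : Type*} (s : Finset ι) (f : ι → ℕ) (a b : ℕ) :
    ∏ i ∈ s, (b * f i + a) ≡ a ^ s.card [MOD b] :=
  (ModEq.prod (g := fun _ => a) fun _ _ => by simp [ModEq]).trans (by rw [prod_const])

theorem ModEq.mul_left_of_dvd {g b x y z : ℕ} (hx : g ∣ x) (h : y ≡ z [MOD b]) :
    x * y ≡ x * z [MOD b * g] := by
  obtain ⟨c, rfl⟩ := hx
  rw [mul_comm b, mul_assoc, mul_assoc]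
  exact (h.mul_left c).mul_left' g

end Nat

theorem stmt_6_general (a b : ℕ) (ha : 1 ≤ a) (hsq : a ^ 2 ≡ a [MOD b])
    (g : ℕ) (hg : g = Nat.gcd a b) (k : ℕ) (hk : 1 ≤ k)
    (j : ℕ) :
    (b * g * j + g * a + (a + b - g) * ∏ i ∈ Finset.Icc 1 k, (b * i + a))
      ≡ a ^ 2 [MOD b * g] := by
  have hga : g ∣ a := hg ▸ Nat.gcd_dvd_left a b
  have hgb : g ∣ b := hg ▸ Nat.gcd_dvd_right a b
  have hg_le : g ≤ a + b := Nat.le_of_dvd (by omega) (dvd_add hga hgb)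
  have hprod : ∏ i ∈ Icc 1 k, (b * i + a) ≡ a [MOD b] := by
    have := Nat.prod_mul_add_modEq_pow (Icc 1 k) id a b
    rw [Nat.card_Icc, add_tsub_cancel_right] at this
    exact this.trans (Nat.pow_modEq_self_of_sq_modEq_self hsq (by omega))
  calc b * g * j + g * a + (a + b - g) * ∏ i ∈ Icc 1 k, (b * i + a)
      ≡ 0 + g * a + (a + b - g) * a [MOD b * g] :=
        ((Nat.modEq_zero_iff_dvd.2 (dvd_mul_right _ _)).add_right _).add
          (Nat.ModEq.mul_left_of_dvd (Nat.dvd_sub (dvd_add hga hgb) dvd_rfl) hprod)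
    _ = a ^ 2 + b * a := by zify [hg_le]; ring
    _ ≡ a ^ 2 + 0 [MOD b * g] :=
        (Nat.modEq_zero_iff_dvd.2 (mul_dvd_mul_left b hga)).add_left _
    _ = a ^ 2 := add_zero _

theorem stmt_6 (a b : ℕ) (ha : 1 ≤ a) (hb : 1 ≤ b) (hsq : a ^ 2 ≡ a [MOD b])
    (g : ℕ) (hg : g = Nat.gcd a b) (k : ℕ) (hk : 1 ≤ k)
    (j : ℕ) (hj1 : 1 ≤ j) (hjk : j ≤ k) :
    (b * g * j + g * a + (a + b - g) * ∏ i ∈ Finset.Icc 1 k, (b * i + a))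
      ≡ a ^ 2 [MOD b * g] :=
  stmt_6_general a b ha hsq g hg k hk j
end

section
/- For every k ≥ 1, j with 1 ≤ j ≤ k, and c ≥ 0, the number b·g·j + g·(b·c + a) + (a + b − g)·∏_{i=1}^{k}(b·i + b·c + a) is congruent to a² mod (b·g) and is reducible in M_{a,b}. -/
/-!
Write `g = gcd a b`, `d = a + b - g`, `m = b j + b c + a` and `P = m Q` with `Q` the product of
the other factors. Then the number is `m (g + d Q)`. Both factors are `≡ a mod b`: in `ℤ/b`
the residue of `a` is idempotent and `g a = g` (Bézout), so `(a - g) aⁿ = a - g` and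
`g + d Q ≡ g + (a - g) a^(k-1) = a`. For the congruence mod `b g`, `g ∣ d` and `P ≡ a mod b`
give `d P ≡ d a mod b g`, and the number is then `≡ g a + d a = a² + a b ≡ a² mod b g`.
-/

theorem mul_pow_eq_self_of_mul_eq_self {M : Type*} [Monoid M] {e x : M} (h : e * x = e) :
    ∀ n : ℕ, e * x ^ n = e
  | 0 => by rw [pow_zero, mul_one]
  | n + 1 => by rw [pow_succ, ← mul_assoc, mul_pow_eq_self_of_mul_eq_self h n, h]

theorem Nat.ModEq.mul_of_dvd {b g d x y : ℕ} (hgd : g ∣ d) (h : x ≡ y [MOD b]) :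
    d * x ≡ d * y [MOD b * g] := by
  obtain ⟨e, rfl⟩ := hgd
  simpa only [mul_comm g e, mul_assoc, mul_comm b g] using (h.mul_left' g).mul_left e

section CongruenceMonoid

variable {a b : ℕ}

theorem isIdempotentElem_natCast_of_sq_modEq (hsq : a ^ 2 ≡ a [MOD b]) :
    IsIdempotentElem (a : ZMod b) := by
  rw [← ZMod.natCast_eq_natCast_iff] at hsq
  push_cast at hsq
  rwa [IsIdempotentElem, ← sq]

theorem natCast_gcd_mul_natCast (hsq : a ^ 2 ≡ a [MOD b]) :
    ((a.gcd b : ℕ) : ZMod b) * a = a.gcd b := by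
  have hbezout := congrArg (Int.cast : ℤ → ZMod b) (Nat.gcd_eq_gcd_ab a b)
  push_cast [ZMod.natCast_self] at hbezout
  rw [zero_mul, add_zero] at hbezout
  rw [hbezout, mul_right_comm, (isIdempotentElem_natCast_of_sq_modEq hsq).eq]

theorem pow_modEq_self (hsq : a ^ 2 ≡ a [MOD b]) {n : ℕ} (hn : n ≠ 0) :
    a ^ n ≡ a [MOD b] := by
  obtain ⟨n, rfl⟩ := Nat.exists_eq_succ_of_ne_zero hn
  rw [← ZMod.natCast_eq_natCast_iff]
  push_cast
  exact (isIdempotentElem_natCast_of_sq_modEq hsq).pow_succ_eq n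

theorem mul_add_mul_add_modEq (i c : ℕ) : b * i + b * c + a ≡ a [MOD b] := by
  rw [← ZMod.natCast_eq_natCast_iff]
  simp

theorem prod_mul_add_mul_add_modEq_pow (c : ℕ) (s : Finset ℕ) :
    ∏ i ∈ s, (b * i + b * c + a) ≡ a ^ s.card [MOD b] := by
  rw [← Finset.prod_const]
  exact Nat.ModEq.prod fun i _ => mul_add_mul_add_modEq i c

theorem gcd_add_sub_gcd_mul_modEq (hb : 0 < b) (hsq : a ^ 2 ≡ a [MOD b]) {Q n : ℕ}
    (hQ : Q ≡ a ^ n [MOD b]) : a.gcd b + (a + b - a.gcd b) * Q ≡ a [MOD b] := by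
  have hle : a.gcd b ≤ a + b := (Nat.gcd_le_right a hb).trans (Nat.le_add_left b a)
  have hfix : ((a : ZMod b) - a.gcd b) * a = a - a.gcd b := by
    rw [sub_mul, (isIdempotentElem_natCast_of_sq_modEq hsq).eq, natCast_gcd_mul_natCast hsq]
  rw [← ZMod.natCast_eq_natCast_iff] at hQ ⊢
  push_cast [Nat.cast_sub hle, hQ, ZMod.natCast_self]
  rw [add_zero, mul_pow_eq_self_of_mul_eq_self hfix, add_sub_cancel]

theorem add_sub_gcd_mul_modEq_sq (hb : 0 < b) {P : ℕ} (hP : P ≡ a [MOD b]) (j c : ℕ) :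
    b * a.gcd b * j + a.gcd b * (b * c + a) + (a + b - a.gcd b) * P
      ≡ a ^ 2 [MOD b * a.gcd b] := by
  set g := a.gcd b
  have hle : g ≤ a + b := (Nat.gcd_le_right a hb).trans (Nat.le_add_left b a)
  have hgd : g ∣ a + b - g :=
    Nat.dvd_sub (dvd_add (Nat.gcd_dvd_left a b) (Nat.gcd_dvd_right a b)) dvd_rfl
  calc b * g * j + g * (b * c + a) + (a + b - g) * P
      = b * g * (j + c) + (g * a + (a + b - g) * P) := by ring
    _ ≡ 0 + (g * a + (a + b - g) * a) [MOD b * g] :=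
        (Nat.modEq_zero_iff_dvd.2 (dvd_mul_right _ _)).add ((hP.mul_of_dvd hgd).add_left _)
    _ = a ^ 2 + b * a := by rw [zero_add, ← add_mul, Nat.add_sub_cancel' hle]; ring
    _ ≡ a ^ 2 + 0 [MOD b * g] :=
        (Nat.modEq_zero_iff_dvd.2 (mul_dvd_mul_left b (Nat.gcd_dvd_left a b))).add_left _

theorem isReducible_mul {m₁ m₂ : ℕ} (h₁ : m₁ ≡ a [MOD b]) (h₂ : m₂ ≡ a [MOD b])
    (hm₁ : 2 ≤ m₁) (hm₂ : 2 ≤ m₂) : IsReducible a b (m₁ * m₂) :=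
  ⟨m₁, m₂, Or.inr ⟨by omega, h₁⟩, Or.inr ⟨by omega, h₂⟩,
    by omega, by omega, rfl⟩

end CongruenceMonoid

theorem stmt_8 (a b : ℕ) (ha : 1 ≤ a) (hb : 1 ≤ b) (hsq : a ^ 2 ≡ a [MOD b])
    (g : ℕ) (hg : g = Nat.gcd a b) (k : ℕ) (hk : 1 ≤ k)
    (j : ℕ) (hj1 : 1 ≤ j) (hjk : j ≤ k) (c : ℕ) :
    (b * g * j + g * (b * c + a)
        + (a + b - g) * ∏ i ∈ Finset.Icc 1 k, (b * i + b * c + a))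
      ≡ a ^ 2 [MOD b * g] ∧
    IsReducible a b
      (b * g * j + g * (b * c + a)
        + (a + b - g) * ∏ i ∈ Finset.Icc 1 k, (b * i + b * c + a)) := by
  subst hg
  set g := a.gcd b
  set d := a + b - g
  have hj : j ∈ Finset.Icc 1 k := Finset.mem_Icc.2 ⟨hj1, hjk⟩
  set Q := ∏ i ∈ (Finset.Icc 1 k).erase j, (b * i + b * c + a)
  have hPQ := Finset.mul_prod_erase (Finset.Icc 1 k) (fun i => b * i + b * c + a) hj
  have hP : ∏ i ∈ Finset.Icc 1 k, (b * i + b * c + a) ≡ a [MOD b] :=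
    (prod_mul_add_mul_add_modEq_pow c _).trans (by simpa using pow_modEq_self hsq (by omega))
  refine ⟨add_sub_gcd_mul_modEq_sq hb hP j c, ?_⟩
  have hQ : 0 < Q := Finset.prod_pos fun i _ => by positivity
  have hga : g ≤ a := Nat.gcd_le_left b ha
  have hg : 0 < g := Nat.gcd_pos_of_pos_left b ha
  have hbj : b ≤ b * j := Nat.le_mul_of_pos_right b hj1
  have hdQ : 0 < d * Q := Nat.mul_pos (by omega) hQ
  rw [← hPQ, show b * g * j + g * (b * c + a) + d * ((b * j + b * c + a) * Q)
      = (b * j + b * c + a) * (g + d * Q) by ring]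
  exact isReducible_mul (mul_add_mul_add_modEq j c)
    (gcd_add_sub_gcd_mul_modEq hb hsq (prod_mul_add_mul_add_modEq_pow c _)) (by omega) (by omega)
end

section
/- In M_{9,12}, every element n with n ≢ 81 mod 36 (equivalently n ≢ 9 mod 36) is irreducible. -/
-- `a² - m₁m₂ = (a - m₁)m₂ + a(a - m₂)`, and `gcd(a, b)` divides both `a` and `m₂`.
theorem Nat.ModEq.mul_modEq_sq_mul_gcd_s18 {a b m₁ m₂ : ℕ} (h₁ : m₁ ≡ a [MOD b])
    (h₂ : m₂ ≡ a [MOD b]) : m₁ * m₂ ≡ a ^ 2 [MOD b * Nat.gcd a b] := by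
  have hb₁ : (b : ℤ) ∣ a - m₁ := Nat.modEq_iff_dvd.mp h₁
  have hb₂ : (b : ℤ) ∣ a - m₂ := Nat.modEq_iff_dvd.mp h₂
  have hg₂ : Nat.gcd a b ∣ m₂ := h₂.gcd_eq ▸ Nat.gcd_dvd_left m₂ b
  have hga : ((Nat.gcd a b : ℕ) : ℤ) ∣ a := Int.natCast_dvd_natCast.mpr (Nat.gcd_dvd_left a b)
  apply Nat.modEq_iff_dvd.mpr
  push_cast
  have hsplit : (a : ℤ) ^ 2 - m₁ * m₂ = (a - m₁) * m₂ + (a - m₂) * a := by ring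
  rw [hsplit]
  exact dvd_add (mul_dvd_mul hb₁ (Int.natCast_dvd_natCast.mpr hg₂)) (mul_dvd_mul hb₂ hga)

theorem Mab.modEq_of_ne_one_s18 {a b n : ℕ} (hn : Mab a b n) (hn1 : n ≠ 1) : n ≡ a [MOD b] :=
  (hn.resolve_left hn1).2

theorem stmt_18 (n : ℕ) (hn : Mab 9 12 n) (hn1 : n ≠ 1)
    (hcong : ¬ n ≡ 81 [MOD 36]) :
    IsIrred 9 12 n := by
  refine ⟨hn, hn1, ?_⟩
  rintro ⟨m₁, m₂, h₁, h₂, h₁1, h₂1, rfl⟩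
  have hprod := (h₁.modEq_of_ne_one_s18 h₁1).mul_modEq_sq_mul_gcd_s18 (h₂.modEq_of_ne_one_s18 h₂1)
  norm_num at hprod
  exact hcong hprod
end

section
/- If a > 1 and a | b, then the set of reducible elements of M_{a,b} is exactly the arithmetic progression {a² + a·b·q : q ∈ ℤ_{≥0}}; in particular the irreducible elements of M_{a,b} form an eventually periodic sequence with period a·b. -/
/-!
Since `a ∣ b`, every `n ≡ a [MOD b]` is divisible by `a`, so the non-units of `M_{a,b}` are
exactly the numbers `a + b k`. Writing `b = a c`, a product of two of them is
`(a + b k₁)(a + b k₂) = a² + a b (k₁ + k₂ + c k₁ k₂)`, and conversely `a² + a b q = a (a + b q)`.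
Membership in `M_{a,b}` and in `a² + a b ℕ` are both unchanged by adding `a b` once `n ≥ a²`.
-/

variable {a b : ℕ}

theorem Mab.exists_eq_add_mul (hab : a ∣ b) {m : ℕ} (hm : Mab a b m) (hm1 : m ≠ 1) :
    ∃ k, m = a + b * k := by
  obtain rfl | ⟨hm0, hma⟩ := hm
  · exact absurd rfl hm1
  have ham : a ≤ m := Nat.le_of_dvd hm0 ((hma.dvd_iff hab).2 dvd_rfl)
  obtain ⟨k, hk⟩ := (Nat.modEq_iff_dvd' ham).1 hma.symm
  exact ⟨k, by omega⟩

theorem mab_add_mul (ha : 0 < a) (k : ℕ) : Mab a b (a + b * k) :=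
  Or.inr ⟨Nat.le_add_right_of_le ha, Nat.add_mul_mod_self_left a b k⟩

theorem mab_add_mul_iff {n : ℕ} (hn : 1 < n) (c : ℕ) : Mab a b (n + c * b) ↔ Mab a b n := by
  have hmod : n + c * b ≡ n [MOD b] := Nat.add_mul_mod_self_right n c b
  unfold Mab
  constructor
  · rintro (h | ⟨-, h⟩)
    · omega
    · exact Or.inr ⟨hn.le, hmod.symm.trans h⟩
  · rintro (h | ⟨-, h⟩)
    · omega
    · exact Or.inr ⟨by omega, hmod.trans h⟩

theorem isReducible_iff (ha : 1 < a) (hab : a ∣ b) {n : ℕ} :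
    IsReducible a b n ↔ ∃ q, n = a ^ 2 + a * b * q := by
  constructor
  · rintro ⟨m₁, m₂, h₁, h₂, h₁', h₂', rfl⟩
    obtain ⟨k₁, rfl⟩ := h₁.exists_eq_add_mul hab h₁'
    obtain ⟨k₂, rfl⟩ := h₂.exists_eq_add_mul hab h₂'
    obtain ⟨c, rfl⟩ := hab
    exact ⟨k₁ + k₂ + c * k₁ * k₂, by ring⟩
  · rintro ⟨q, rfl⟩
    have hq : a + b * q ≠ 1 := by have := Nat.le_add_right a (b * q); omega
    exact ⟨a, a + b * q, Or.inr ⟨ha.le, rfl⟩, mab_add_mul (by omega) q, ha.ne', hq, by ring⟩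

theorem exists_add_eq_add_mul_iff {c d n : ℕ} (hn : c ≤ n) :
    (∃ q, n + d = c + d * q) ↔ ∃ q, n = c + d * q := by
  constructor
  · rintro ⟨_ | q, hq⟩
    · exact ⟨0, by simp only [mul_zero, add_zero] at hq ⊢; omega⟩
    · exact ⟨q, by rw [Nat.mul_succ] at hq; omega⟩
  · rintro ⟨q, rfl⟩
    exact ⟨q + 1, by ring⟩

theorem isIrred_add_mul_iff (ha : 1 < a) (hab : a ∣ b) {n : ℕ} (hn : a ^ 2 ≤ n) :
    IsIrred a b (n + a * b) ↔ IsIrred a b n := by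
  have hn1 : 1 < n := by nlinarith
  have hn1' : n + a * b ≠ 1 := by omega
  simp only [IsIrred, isReducible_iff ha hab, exists_add_eq_add_mul_iff hn, mab_add_mul_iff hn1,
    ne_eq, hn1', hn1.ne']

theorem stmt_19_general (a b : ℕ) (ha : 1 < a) (hab : a ∣ b) :
    {n : ℕ | IsReducible a b n} = {n : ℕ | ∃ q : ℕ, n = a ^ 2 + a * b * q} ∧
    ∃ N : ℕ, ∀ n : ℕ, N ≤ n → (IsIrred a b n ↔ IsIrred a b (n + a * b)) :=
  ⟨Set.ext fun n => isReducible_iff ha hab,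
    a ^ 2, fun n hn => (isIrred_add_mul_iff ha hab hn).symm⟩

theorem stmt_19 (a b : ℕ) (ha : 1 < a) (hb : 1 ≤ b) (hab : a ∣ b)
    (hsq : a ^ 2 ≡ a [MOD b]) :
    {n : ℕ | IsReducible a b n} = {n : ℕ | ∃ q : ℕ, n = a ^ 2 + a * b * q} ∧
    ∃ N : ℕ, ∀ n : ℕ, N ≤ n → (IsIrred a b n ↔ IsIrred a b (n + a * b)) :=
  stmt_19_general a b ha hab
end
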